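/- arXiv:2507.07377 — 4 statements merged into one kernel-verified Lean document; each statement's English description precedes it below -/
import Mathlib

section
/- If Ω₁ and Ω₂ are int-nearly convex subsets of X and int(Ω₁) ∩ int(Ω₂) ≠ ∅, then Ω₁ ∩ Ω₂ is int-nearly convex. -/
variable {X : Type*} [AddCommGroup X] [Module ℝ X] [TopologicalSpace X]
  [IsTopologicalAddGroup X] [ContinuousSMul ℝ X]

def IntNearlyConvex (Ω : Set X) : Prop :=
  ∃ C : Set X, Convex ℝ C ∧ (interior C).Nonempty ∧ C ⊆ Ω ∧ Ω ⊆ closure C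

/-!
If `C₁ ⊆ Ω₁ ⊆ cl C₁` and `C₂ ⊆ Ω₂ ⊆ cl C₂`, then `C₁ ∩ C₂` witnesses that `Ω₁ ∩ Ω₂` is
int-nearly convex. Since `int (cl C) = int C` for convex `C` with an interior point, a common
interior point `x` of `Ω₁` and `Ω₂` is interior to `C₁` and to `C₂`. Every `y ∈ cl C₁ ∩ cl C₂`
is then a limit of points of the open segment `(x, y)`, which lies in `int C₁ ∩ int C₂`.
-/

open Set

section ConvexTopology

variable {𝕜 E : Type*} [Field 𝕜] [LinearOrder 𝕜] [IsStrictOrderedRing 𝕜]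
  [TopologicalSpace 𝕜] [OrderTopology 𝕜] [AddCommGroup E] [Module 𝕜 E] [TopologicalSpace E]
  [IsTopologicalAddGroup E] [ContinuousSMul 𝕜 E]

theorem Convex.interior_eq_of_subset_of_subset_closure {C Ω : Set E} (hC : Convex 𝕜 C)
    (hCint : (interior C).Nonempty) (hCΩ : C ⊆ Ω) (hΩC : Ω ⊆ closure C) :
    interior Ω = interior C :=
  (interior_mono hΩC).trans (hC.interior_closure_eq_interior_of_nonempty_interior hCint).le
    |>.antisymm (interior_mono hCΩ)

variable [DenselyOrdered 𝕜]

theorem Convex.closure_interior_inter_interior {s t : Set E} (hs : Convex 𝕜 s)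
    (ht : Convex 𝕜 t) (hst : (interior s ∩ interior t).Nonempty) :
    closure (interior s ∩ interior t) = closure s ∩ closure t := by
  refine (closure_inter_subset_inter_closure _ _).trans
    (inter_subset_inter (closure_mono interior_subset) (closure_mono interior_subset))
    |>.antisymm ?_
  rintro y ⟨hys, hyt⟩
  obtain ⟨x, hxs, hxt⟩ := hst
  have hsegment : openSegment 𝕜 x y ⊆ interior s ∩ interior t :=
    subset_inter (hs.openSegment_interior_closure_subset_interior hxs hys)
      (ht.openSegment_interior_closure_subset_interior hxt hyt)
  exact closure_mono hsegment (segment_subset_closure_openSegment (right_mem_segment ..))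

end ConvexTopology

theorem stmt2 (Ω₁ Ω₂ : Set X) (h₁ : IntNearlyConvex Ω₁) (h₂ : IntNearlyConvex Ω₂)
    (hint : (interior Ω₁ ∩ interior Ω₂).Nonempty) :
    IntNearlyConvex (Ω₁ ∩ Ω₂) := by
  obtain ⟨C₁, hC₁, hC₁int, hC₁Ω, hΩC₁⟩ := h₁
  obtain ⟨C₂, hC₂, hC₂int, hC₂Ω, hΩC₂⟩ := h₂
  have hCint : (interior C₁ ∩ interior C₂).Nonempty := by
    rwa [← hC₁.interior_eq_of_subset_of_subset_closure hC₁int hC₁Ω hΩC₁,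
      ← hC₂.interior_eq_of_subset_of_subset_closure hC₂int hC₂Ω hΩC₂]
  refine ⟨C₁ ∩ C₂, hC₁.inter hC₂, by rwa [interior_inter],
    inter_subset_inter hC₁Ω hC₂Ω, ?_⟩
  calc Ω₁ ∩ Ω₂ ⊆ closure C₁ ∩ closure C₂ := inter_subset_inter hΩC₁ hΩC₂
    _ = closure (interior C₁ ∩ interior C₂) := (hC₁.closure_interior_inter_interior hC₂ hCint).symm
    _ ⊆ closure (C₁ ∩ C₂) := closure_mono (inter_subset_inter interior_subset interior_subset)
end

section
/- Let μ(x) = inf{φ(x,y) | y ∈ F(x)} and x₀ with μ(x₀) ∈ ℝ. If F is lower semicontinuous at x₀ (for every open V with F(x₀) ∩ V ≠ ∅ there is a neighborhood U of x₀ with F(x) ∩ V ≠ ∅ for all x ∈ U) and φ is upper semicontinuous at every point (x₀, y) with y ∈ F(x₀), then μ is upper semicontinuous at x₀. -/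
theorem stmt10 {X Y : Type*} [TopologicalSpace X] [TopologicalSpace Y]
    (φ : X × Y → EReal) (F : X → Set Y) (x₀ : X)
    (hfin : ∃ r : ℝ, (⨅ y ∈ F x₀, φ (x₀, y)) = (r : EReal))
    (hF : ∀ V : Set Y, IsOpen V → (F x₀ ∩ V).Nonempty →
      ∃ U ∈ nhds x₀, ∀ x ∈ U, (F x ∩ V).Nonempty)
    (hφ : ∀ y ∈ F x₀, UpperSemicontinuousAt φ (x₀, y)) :
    UpperSemicontinuousAt (fun x => ⨅ y ∈ F x, φ (x, y)) x₀ := by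
  intro l hl
  have h1 : (⨅ y ∈ F x₀, φ (x₀, y)) < l := hl
  rw [iInf_lt_iff] at h1
  obtain ⟨y, h1⟩ := h1
  rw [iInf_lt_iff] at h1
  obtain ⟨hy, h1⟩ := h1
  have hev := hφ y hy l h1
  rw [nhds_prod_eq, Filter.eventually_prod_iff] at hev
  obtain ⟨p, hp, q, hq, hpq⟩ := hev
  obtain ⟨V, hVq, hVopen, hyV⟩ := mem_nhds_iff.mp (Filter.eventually_iff_exists_mem.mpr ⟨_, hq, fun _ h => h⟩ : ∀ᶠ z in nhds y, q z)
  obtain ⟨U, hU, hUall⟩ := hF V hVopen ⟨y, hy, hyV⟩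
  filter_upwards [Filter.eventually_iff_exists_mem.mpr ⟨_, hp, fun _ h => h⟩, hU] with x hxp hxU
  obtain ⟨y', hy'F, hy'V⟩ := hUall x hxU
  calc (⨅ y ∈ F x, φ (x, y)) ≤ φ (x, y') := iInf_le_of_le y' (iInf_le_of_le hy'F le_rfl)
    _ < l := hpq hxp (hVq hy'V)
end

section
/- Let f : X → ℝ ∪ {±∞} be proper and int-nearly convex. Then f agrees with its lower semicontinuous hull cl f on the interior of dom f: cl f(x) = f(x) for all x ∈ int(dom f). -/
/-!
Over an interior point `x` of `dom f`, the vertical line `{x} × ℝ` meets `int C`: extend the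
segment from an interior point of `C` through `(x, ·)` slightly beyond `x`, to a point of
`epi f ⊆ cl C`. If `liminf f (𝓝 x) < r`, then `(x, r) ∈ cl (epi f) ⊆ cl C`, and the open
segment joining it to the point of `int C` above `x` lies in `int C ⊆ epi f`; this forces
`f x ≤ r`.
-/

open Filter Set Topology

theorem liminf_nhds_le_self {X : Type*} [TopologicalSpace X] (f : X → EReal) (x : X) :
    liminf f (𝓝 x) ≤ f x :=
  liminf_le_of_frequently_le'
    ((frequently_pure (p := fun y => f y ≤ f x)).2 le_rfl |>.filter_mono (pure_le_nhds x))

theorem mem_closure_epigraph_of_liminf_lt {X : Type*} [TopologicalSpace X] {f : X → EReal}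
    {x : X} {r : ℝ} (h : liminf f (𝓝 x) < r) :
    (x, r) ∈ closure {p : X × ℝ | f p.1 ≤ p.2} :=
  mem_closure_of_frequently_of_tendsto
    ((frequently_lt_of_liminf_lt (h := h)).mono fun _ hy => hy.le)
    ((continuous_id.prodMk continuous_const).tendsto x)

theorem exists_mem_openSegment_of_mem_interior {E : Type*} [AddCommGroup E] [Module ℝ E]
    [TopologicalSpace E] [IsTopologicalAddGroup E] [ContinuousSMul ℝ E] {D : Set E} {x : E}
    (hx : x ∈ interior D) (y : E) : ∃ z ∈ D, x ∈ openSegment ℝ y z := by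
  have hline : Tendsto (AffineMap.lineMap y x) (𝓝[>] (1 : ℝ)) (𝓝 x) := by
    simpa using ((AffineMap.lineMap_continuous (R := ℝ) (p := y) (q := x)).tendsto 1).mono_left
      nhdsWithin_le_nhds
  obtain ⟨t, htD, ht⟩ :=
    ((hline.eventually_mem (mem_interior_iff_mem_nhds.1 hx)).and self_mem_nhdsWithin).exists
  refine ⟨_, htD, openSegment_eq_image_lineMap ℝ y _ ▸ ⟨t⁻¹, ⟨by positivity, ?_⟩, ?_⟩⟩
  · exact inv_lt_one_of_one_lt₀ ht
  · rw [AffineMap.lineMap_lineMap_right, inv_mul_cancel₀ (by positivity),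
      AffineMap.lineMap_apply_one]

theorem Convex.exists_prodMk_mem_interior_of_mem_openSegment {E F : Type*}
    [AddCommGroup E] [Module ℝ E] [TopologicalSpace E] [IsTopologicalAddGroup E]
    [ContinuousConstSMul ℝ E] [AddCommGroup F] [Module ℝ F] [TopologicalSpace F]
    [IsTopologicalAddGroup F] [ContinuousConstSMul ℝ F] {C : Set (E × F)} (hC : Convex ℝ C)
    {p q : E × F} (hp : p ∈ interior C) (hq : q ∈ closure C) {x : E}
    (hx : x ∈ openSegment ℝ p.1 q.1) : ∃ s, (x, s) ∈ interior C := by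
  obtain ⟨a, b, ha, hb, hab, rfl⟩ := hx
  exact ⟨a • p.2 + b • q.2,
    hC.openSegment_interior_closure_subset_interior hp hq ⟨a, b, ha, hb, hab, rfl⟩⟩

theorem Convex.le_of_mem_interior_of_mem_closure {X : Type*} [AddCommGroup X] [Module ℝ X]
    [TopologicalSpace X] [IsTopologicalAddGroup X] [ContinuousConstSMul ℝ X] {f : X → EReal}
    {C : Set (X × ℝ)} (hC : Convex ℝ C) (hCepi : C ⊆ {p : X × ℝ | f p.1 ≤ p.2}) {x : X}
    {s r : ℝ} (hs : (x, s) ∈ interior C) (hr : (x, r) ∈ closure C) : f x ≤ r := by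
  refine EReal.le_of_forall_lt_iff_le.1 fun c hrc => ?_
  have hrc : r < c := mod_cast hrc
  rcases lt_or_ge c s with hcs | hsc
  · have hc : (x, c) ∈ openSegment ℝ (x, s) (x, r) := by
      rw [← Prod.image_mk_openSegment_right, openSegment_symm, openSegment_eq_Ioo (hrc.trans hcs)]
      exact ⟨c, ⟨hrc, hcs⟩, rfl⟩
    exact hCepi (interior_subset (hC.openSegment_interior_closure_subset_interior hs hr hc))
  · exact (hCepi (interior_subset hs)).trans (mod_cast hsc)

theorem stmt13_general {X : Type*} [AddCommGroup X] [Module ℝ X] [TopologicalSpace X]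
    [IsTopologicalAddGroup X] [ContinuousSMul ℝ X] (f : X → EReal)
    (hnc : ∃ C : Set (X × ℝ), Convex ℝ C ∧ (interior C).Nonempty ∧
      C ⊆ {p : X × ℝ | f p.1 ≤ (p.2 : EReal)} ∧
      {p : X × ℝ | f p.1 ≤ (p.2 : EReal)} ⊆ closure C) :
    ∀ x ∈ interior {x : X | f x < ⊤}, Filter.liminf f (nhds x) = f x := by
  obtain ⟨C, hC, ⟨p, hp⟩, hCepi, hepiC⟩ := hnc
  intro x hx
  obtain ⟨z, hz, hxz⟩ := exists_mem_openSegment_of_mem_interior hx p.1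
  obtain ⟨t, hzt, -⟩ := EReal.exists_between_coe_real hz
  obtain ⟨s, hs⟩ := hC.exists_prodMk_mem_interior_of_mem_openSegment hp
    (q := (z, t)) (hepiC hzt.le) hxz
  refine (liminf_nhds_le_self f x).antisymm (EReal.le_of_forall_lt_iff_le.1 fun r hr => ?_)
  exact hC.le_of_mem_interior_of_mem_closure hCepi hs
    (closure_minimal hepiC isClosed_closure (mem_closure_epigraph_of_liminf_lt hr))

theorem stmt13 {X : Type*} [AddCommGroup X] [Module ℝ X] [TopologicalSpace X]
    [IsTopologicalAddGroup X] [ContinuousSMul ℝ X] (f : X → EReal)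
    (hdom : ∃ x, f x ≠ ⊤) (hbot : ∀ x, f x ≠ ⊥)
    (hnc : ∃ C : Set (X × ℝ), Convex ℝ C ∧ (interior C).Nonempty ∧
      C ⊆ {p : X × ℝ | f p.1 ≤ (p.2 : EReal)} ∧
      {p : X × ℝ | f p.1 ≤ (p.2 : EReal)} ⊆ closure C) :
    ∀ x ∈ interior {x : X | f x < ⊤}, Filter.liminf f (nhds x) = f x :=
  stmt13_general f hnc
end

section
/- Let f be a proper int-nearly convex function on a topological vector space X. Then int(epi f) = {(x, λ) | x ∈ int(dom f) and λ > f(x)}. -/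
/-!
A neighbourhood `U ×ˢ V` of `(x, λ)` inside `epi f` gives some `λ' < λ` with `f ≤ λ'` on `U`, so
`x ∈ int (dom f)` and `f x < λ`. Conversely, take `C` convex with a point `p₀ ∈ int C` and
`C ⊆ epi f ⊆ cl C`. For `x ∈ int (dom f)` the point `x₁ = x + t • (x - p₀.1)` stays in `dom f` for
small `t > 0`, and the segment from `p₀` to a point of `epi f ⊆ cl C` above `x₁` passes through
`int C` above `x`. Once some `(x, ν)` lies in `int C`, each `(x, λ)` with `λ > f x` lies on an open
segment from `(x, ν)` to a point of `epi f` on the same vertical line, hence in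
`int C ⊆ int (epi f)`.
-/

open Set Filter Topology

theorem exists_lt_eventually_le_of_mem_interior_epigraph {X : Type*} [TopologicalSpace X]
    {f : X → EReal} {p : X × ℝ} (hp : p ∈ interior {q : X × ℝ | f q.1 ≤ (q.2 : EReal)}) :
    ∃ l < p.2, ∀ᶠ y in 𝓝 p.1, f y ≤ (l : EReal) := by
  obtain ⟨U, hU, V, hV, hUV⟩ := mem_nhds_prod_iff.1 (isOpen_interior.mem_nhds hp)
  obtain ⟨l, hl, hlV⟩ := ((frequently_lt_nhds p.2).and_eventually hV).exists
  have hUV : U ×ˢ V ⊆ {q : X × ℝ | f q.1 ≤ (q.2 : EReal)} := hUV.trans interior_subset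
  exact ⟨l, hl, eventually_of_mem hU fun y hy ↦ hUV (mk_mem_prod hy hlV)⟩

theorem interior_epigraph_subset {X : Type*} [TopologicalSpace X] (f : X → EReal) :
    interior {p : X × ℝ | f p.1 ≤ (p.2 : EReal)} ⊆
      {p : X × ℝ | p.1 ∈ interior {x : X | f x < ⊤} ∧ f p.1 < (p.2 : EReal)} := by
  intro p hp
  obtain ⟨l, hl, hfl⟩ := exists_lt_eventually_le_of_mem_interior_epigraph hp
  exact ⟨mem_interior_iff_mem_nhds.2 (hfl.mono fun y hy ↦ hy.trans_lt (EReal.coe_lt_top l)),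
    hfl.self_of_nhds.trans_lt (EReal.coe_lt_coe_iff.2 hl)⟩

section Convex

variable {V W : Type*} [AddCommGroup V] [Module ℝ V] [TopologicalSpace V]
  [IsTopologicalAddGroup V] [ContinuousConstSMul ℝ V]

theorem Convex.interior_image_closure_subset_image_interior [AddCommGroup W] [Module ℝ W]
    [TopologicalSpace W] [ContinuousAdd W] [ContinuousSMul ℝ W] {C : Set V} (hC : Convex ℝ C)
    (hCint : (interior C).Nonempty) (π : V →ₗ[ℝ] W) :
    interior (π '' closure C) ⊆ π '' interior C := by
  intro x hx
  obtain ⟨p₀, hp₀⟩ := hCint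
  have hline : ∀ᶠ t in 𝓝 (0 : ℝ), x + t • (x - π p₀) ∈ π '' closure C := by
    have hcont : Continuous fun t : ℝ ↦ x + t • (x - π p₀) := by fun_prop
    refine hcont.continuousAt.preimage_mem_nhds ?_
    simpa using mem_interior_iff_mem_nhds.1 hx
  obtain ⟨t, ⟨q, hq, hπq⟩, ht : (0 : ℝ) < t⟩ :=
    ((hline.filter_mono nhdsWithin_le_nhds).and (self_mem_nhdsWithin (s := Ioi 0))).exists
  refine ⟨(t / (1 + t)) • p₀ + (1 / (1 + t)) • q,
    hC.combo_interior_closure_mem_interior hp₀ hq (by positivity) (by positivity)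
      (by field_simp; ring), ?_⟩
  rw [map_add, map_smul, map_smul, hπq]
  match_scalars <;> field_simp
  ring

variable {C : Set (V × ℝ)} {x : V} {ν l : ℝ}

theorem Convex.mk_mem_interior_of_mem_openSegment (hC : Convex ℝ C) {m : ℝ}
    (hν : (x, ν) ∈ interior C) (hm : (x, m) ∈ closure C) (hl : l ∈ openSegment ℝ ν m) :
    (x, l) ∈ interior C :=
  hC.openSegment_interior_closure_subset_interior hν hm
    (Prod.image_mk_openSegment_right (𝕜 := ℝ) x ν m ▸ mem_image_of_mem _ hl)

theorem Convex.mk_mem_interior_of_forall_le_mem_closure (hC : Convex ℝ C) {m₀ : ℝ}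
    (hν : (x, ν) ∈ interior C) (hm₀ : ∀ m, m₀ ≤ m → (x, m) ∈ closure C) (hl : m₀ < l) :
    (x, l) ∈ interior C := by
  rcases lt_trichotomy l ν with hlν | rfl | hνl
  · refine hC.mk_mem_interior_of_mem_openSegment hν (hm₀ m₀ le_rfl) ?_
    rw [openSegment_symm ℝ, openSegment_eq_Ioo (hl.trans hlν)]
    exact ⟨hl, hlν⟩
  · exact hν
  · refine hC.mk_mem_interior_of_mem_openSegment hν (hm₀ (2 * l - ν) (by linarith)) ?_
    rw [openSegment_eq_Ioo (by linarith)]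
    constructor <;> linarith

end Convex

theorem stmt14_general {X : Type*} [AddCommGroup X] [Module ℝ X] [TopologicalSpace X]
    [IsTopologicalAddGroup X] [ContinuousSMul ℝ X] (f : X → EReal)
    (hnc : ∃ C : Set (X × ℝ), Convex ℝ C ∧ (interior C).Nonempty ∧
      C ⊆ {p : X × ℝ | f p.1 ≤ (p.2 : EReal)} ∧
      {p : X × ℝ | f p.1 ≤ (p.2 : EReal)} ⊆ closure C) :
    interior {p : X × ℝ | f p.1 ≤ (p.2 : EReal)} =
      {p : X × ℝ | p.1 ∈ interior {x : X | f x < ⊤} ∧ f p.1 < (p.2 : EReal)} := by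
  refine (interior_epigraph_subset f).antisymm ?_
  rintro ⟨x, l⟩ ⟨hx, hfl⟩
  obtain ⟨C, hC, hCint, hCE, hEC⟩ := hnc
  have hdom : {x : X | f x < ⊤} ⊆ LinearMap.fst ℝ X ℝ '' closure C := fun y hy ↦
    have ⟨μ, hμ⟩ := EReal.exists_between_coe_real hy
    ⟨(y, μ), hEC hμ.1.le, rfl⟩
  obtain ⟨⟨_, ν⟩, hν, rfl⟩ :=
    hC.interior_image_closure_subset_image_interior hCint _ (interior_mono hdom hx)
  obtain ⟨m₀, hfm₀, hm₀l⟩ := EReal.lt_iff_exists_real_btwn.1 hfl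
  refine interior_mono hCE (hC.mk_mem_interior_of_forall_le_mem_closure hν (fun m hm ↦ ?_)
    (EReal.coe_lt_coe_iff.1 hm₀l))
  exact hEC (hfm₀.le.trans (EReal.coe_le_coe_iff.2 hm))

theorem stmt14 {X : Type*} [AddCommGroup X] [Module ℝ X] [TopologicalSpace X]
    [IsTopologicalAddGroup X] [ContinuousSMul ℝ X] (f : X → EReal)
    (hdom : ∃ x, f x ≠ ⊤) (hbot : ∀ x, f x ≠ ⊥)
    (hnc : ∃ C : Set (X × ℝ), Convex ℝ C ∧ (interior C).Nonempty ∧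
      C ⊆ {p : X × ℝ | f p.1 ≤ (p.2 : EReal)} ∧
      {p : X × ℝ | f p.1 ≤ (p.2 : EReal)} ⊆ closure C) :
    interior {p : X × ℝ | f p.1 ≤ (p.2 : EReal)} =
      {p : X × ℝ | p.1 ∈ interior {x : X | f x < ⊤} ∧ f p.1 < (p.2 : EReal)} :=
  stmt14_general f hnc
end
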